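/- Define u_{j,i,j',i',j'',i''} = \alpha_{i+j}\alpha_{j'} \sum_{n=0}^{\min(i,i')} \frac{(t^{-i};t)_n(t^{-i'};t)_n}{(t;t)_n(t^{-(i+j)};t)_n} t^{n(i''+1)} for nonnegative integer arguments satisfying the balance condition. Then u satisfies the recurrence u_{j,i,j',i',j'',i''+1} = t^i (1-t^{j'}) u_{j,i,j'-1,i',j'',i''} + (1-t^i) u_{j+1,i-1,j',i',j'',i''}, whenever all arguments on both sides are nonnegative and balanced. -/

import Mathlib

open scoped BigOperators

/-- The indeterminate `t`, as a rational function over `ℚ`. -/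
noncomputable def t : RatFunc ℚ := RatFunc.X

/-- `α m = ∏_{s=1}^m (1 - t^s)`. -/
noncomputable def al (m : ℕ) : RatFunc ℚ := ∏ s ∈ Finset.range m, (1 - t ^ (s + 1))

/-- The q-Pochhammer symbol `(x;t)_n = ∏_{r=0}^{n-1} (1 - x t^r)`. -/
noncomputable def poch (x : RatFunc ℚ) (n : ℕ) : RatFunc ℚ :=
  ∏ r ∈ Finset.range n, (1 - x * t ^ r)

/-- The subscripted fugacity
`u_{j,i,j',i',j'',i''} = α_{i+j} α_{j'} ·
  ∑_{n=0}^{min(i,i')} (t^{-i};t)_n (t^{-i'};t)_n / ((t;t)_n (t^{-(i+j)};t)_n) · t^{n(i''+1)}`. -/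
noncomputable def usub (j i j' i' j'' i'' : ℕ) : RatFunc ℚ :=
  al (i + j) * al j' *
    ∑ n ∈ Finset.range (min i i' + 1),
      poch (t ^ (-(i : ℤ))) n * poch (t ^ (-(i' : ℤ))) n /
          (poch t n * poch (t ^ (-((i : ℤ) + (j : ℤ)))) n) *
        t ^ (n * (i'' + 1))

/-
Write `c_i(n)` (`usubCoeff i i' (i + j) n`) for the `n`-th coefficient of the sum defining `u`.
The `q`-Pochhammer identity `(x;t)_n (1 - x t^n) = (1 - x) (x t;t)_n = (x;t)_{n+1}` at
`x = t^{-(k+1)}` gives `t^n c_{k+1}(n) = t^{k+1} c_{k+1}(n) + (1 - t^{k+1}) c_k(n)`.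
Summing against `t^{n(i''+1)}` yields the recurrence, the two sums being over the same range
because `c_k(n) = 0` for `n > k`; the factor `1 - t^{j'}` is absorbed by
`α_{j'} = α_{j'-1} (1 - t^{j'})`.
-/

lemma t_ne_zero : t ≠ 0 := RatFunc.X_ne_zero

lemma al_succ (m : ℕ) : al (m + 1) = al m * (1 - t ^ (m + 1)) :=
  Finset.prod_range_succ _ m

lemma poch_mul_one_sub_mul_pow (x : RatFunc ℚ) (n : ℕ) :
    poch x n * (1 - x * t ^ n) = (1 - x) * poch (x * t) n := by
  rw [poch, poch, ← Finset.prod_range_succ, Finset.prod_range_succ', pow_zero, mul_one, mul_comm]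
  exact congrArg _ (Finset.prod_congr rfl fun r _ => by ring)

lemma poch_zpow_neg_eq_zero {m n : ℕ} (h : m < n) : poch (t ^ (-(m : ℤ))) n = 0 := by
  refine Finset.prod_eq_zero (Finset.mem_range.mpr h) ?_
  rw [← zpow_natCast t m, ← zpow_add₀ t_ne_zero, neg_add_cancel, zpow_zero, sub_self]

lemma poch_zpow_neg_succ_mul (k n : ℕ) :
    poch (t ^ (-((k : ℤ) + 1))) n * (t ^ n - t ^ (k + 1)) =
      (1 - t ^ (k + 1)) * poch (t ^ (-(k : ℤ))) n := by
  have hinv : t ^ (-((k : ℤ) + 1)) * t ^ (k + 1) = 1 := by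
    rw [← zpow_natCast, ← zpow_add₀ t_ne_zero]; push_cast; simp
  have hshift : t ^ (-((k : ℤ) + 1)) * t = t ^ (-(k : ℤ)) := by
    rw [← zpow_add_one₀ t_ne_zero]; ring_nf
  have h := poch_mul_one_sub_mul_pow (t ^ (-((k : ℤ) + 1))) n
  rw [hshift] at h
  linear_combination (-t ^ (k + 1)) * h - (poch (t ^ (-((k : ℤ) + 1))) n * t ^ n
    - poch (t ^ (-(k : ℤ))) n) * hinv

noncomputable def usubCoeff (i i' m n : ℕ) : RatFunc ℚ :=
  poch (t ^ (-(i : ℤ))) n * poch (t ^ (-(i' : ℤ))) n / (poch t n * poch (t ^ (-(m : ℤ))) n)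

lemma usub_eq_sum (j i j' i' j'' e : ℕ) :
    usub j i j' i' j'' e =
      al (i + j) * al j' *
        ∑ n ∈ Finset.range (min i i' + 1), usubCoeff i i' (i + j) n * t ^ (n * (e + 1)) := by
  simp only [usub, usubCoeff, Nat.cast_add]

lemma usubCoeff_eq_zero_of_lt {i i' m n : ℕ} (h : min i i' < n) : usubCoeff i i' m n = 0 := by
  rcases min_lt_iff.mp h with h | h <;> rw [usubCoeff, poch_zpow_neg_eq_zero h] <;> simp

lemma sum_usubCoeff_eq_of_le {i i' m N : ℕ} (f : ℕ → RatFunc ℚ) (hN : min i i' + 1 ≤ N) :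
    ∑ n ∈ Finset.range (min i i' + 1), usubCoeff i i' m n * f n =
      ∑ n ∈ Finset.range N, usubCoeff i i' m n * f n := by
  refine Finset.sum_subset (Finset.range_subset_range.mpr hN) fun n _ hn => ?_
  rw [usubCoeff_eq_zero_of_lt (by rw [Finset.mem_range] at hn; omega), zero_mul]

lemma usubCoeff_succ_mul_pow (k i' m n : ℕ) :
    usubCoeff (k + 1) i' m n * t ^ n =
      t ^ (k + 1) * usubCoeff (k + 1) i' m n + (1 - t ^ (k + 1)) * usubCoeff k i' m n := by
  have h := poch_zpow_neg_succ_mul k n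
  simp only [usubCoeff, Nat.cast_succ]
  linear_combination
    (poch (t ^ (-(i' : ℤ))) n / (poch t n * poch (t ^ (-(m : ℤ))) n)) * h

lemma sum_usubCoeff_succ (k i' m e N : ℕ) :
    ∑ n ∈ Finset.range N, usubCoeff (k + 1) i' m n * t ^ (n * (e + 2)) =
      t ^ (k + 1) * ∑ n ∈ Finset.range N, usubCoeff (k + 1) i' m n * t ^ (n * (e + 1)) +
        (1 - t ^ (k + 1)) * ∑ n ∈ Finset.range N, usubCoeff k i' m n * t ^ (n * (e + 1)) := by
  rw [Finset.mul_sum, Finset.mul_sum, ← Finset.sum_add_distrib]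
  refine Finset.sum_congr rfl fun n _ => ?_
  rw [show n * (e + 2) = n * (e + 1) + n by ring, pow_add]
  linear_combination t ^ (n * (e + 1)) * usubCoeff_succ_mul_pow k i' m n

theorem usub_recurrence_general (j i j' i' j'' i'' : ℕ) (hi : 1 ≤ i) (hj' : 1 ≤ j') :
    usub j i j' i' j'' (i'' + 1) =
      t ^ i * (1 - t ^ j') * usub j i (j' - 1) i' j'' i'' +
        (1 - t ^ i) * usub (j + 1) (i - 1) j' i' j'' i'' := by
  obtain ⟨k, rfl⟩ : ∃ k, i = k + 1 := ⟨i - 1, by omega⟩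
  obtain ⟨l, rfl⟩ : ∃ l, j' = l + 1 := ⟨j' - 1, by omega⟩
  simp only [usub_eq_sum, Nat.add_sub_cancel, al_succ l, show k + (j + 1) = k + 1 + j by omega]
  rw [sum_usubCoeff_eq_of_le _ (show min k i' + 1 ≤ min (k + 1) i' + 1 by omega)]
  linear_combination al (k + 1 + j) * al l * (1 - t ^ (l + 1)) *
    sum_usubCoeff_succ k i' (k + 1 + j) i'' (min (k + 1) i' + 1)

/-- The recurrence
`u_{j,i,j',i',j'',i''+1} = t^i (1-t^{j'}) u_{j,i,j'-1,i',j'',i''} + (1-t^i) u_{j+1,i-1,j',i',j'',i''}`,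
whenever all arguments on both sides are nonnegative and balanced. -/
theorem usub_recurrence (j i j' i' j'' i'' : ℕ) (hi : 1 ≤ i) (hj' : 1 ≤ j')
    (h1 : (i' : ℤ) - j = ((i'' : ℤ) + 1) - j')
    (h2 : ((i'' : ℤ) + 1) - j' = (i : ℤ) - j'') :
    usub j i j' i' j'' (i'' + 1) =
      t ^ i * (1 - t ^ j') * usub j i (j' - 1) i' j'' i'' +
        (1 - t ^ i) * usub (j + 1) (i - 1) j' i' j'' i'' :=
  usub_recurrence_general j i j' i' j'' i'' hi hj'
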